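/- arXiv:2511.23023 — 2 statements merged into one kernel-verified Lean document; each statement's English description precedes it below -/
import Mathlib

section
/- Let W ∈ ℝ^{n×n} satisfy Assumption 1 with normalized left Perron eigenvector w, and let Z = {(i,j) : W_{ij} ≠ 0} be the support of W. Suppose the linear subspace V = {K ∈ ℝ^{n×n} : K_{ij} = 0 for all (i,j) ∉ Z, K·1 = 0, and wᵀK = 0} contains a nonzero matrix (equivalently, the 2n × |Z| constraint matrix M̃, representing the linear map sending the entries of K supported on Z to the stacked vector (K·1 ; Kᵀw), has rank strictly less than |Z|). Then there exists a nonzero K ∈ V such that 1 is a simple eigenvalue of W+K, every other (complex) eigenvalue of W+K has modulus strictly less than 1, K_{ij} = 0 whenever W_{ij} = 0 with i ≠ j, and for every x₀ ∈ ℝ^n, lim_{t→∞} (W+K)^t x₀ = (wᵀx₀)·1. -/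
/-!
Perturbing `W` by `ε • K₀` keeps `𝟙` and `w` as right and left eigenvectors for the eigenvalue `1`.
By Brauer's deflation, `X * χ_A = (X - 1) * χ_(A - 𝟙 wᵀ)` whenever `A 𝟙 = 𝟙` and `wᵀ 𝟙 = 1`, so
"`1` is a simple eigenvalue of `A` and all other eigenvalues lie in the open unit disk" is
equivalent to the spectral radius of `A - 𝟙 wᵀ` being `< 1`. By Gelfand's formula this is an
open condition on `A`, so it survives a small `ε > 0`; and then
`A ^ (t + 1) = 𝟙 wᵀ + (A - 𝟙 wᵀ) ^ (t + 1) → 𝟙 wᵀ`.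
-/

open Matrix Filter

/-- Assumption 1: `W` is row-stochastic, `1` is a simple eigenvalue of `W` (over `ℂ`),
all other eigenvalues have modulus `< 1`, and `w` is the normalized left Perron
eigenvector of `W`. -/
def Assumption1 {n : ℕ} (W : Matrix (Fin n) (Fin n) ℝ) (w : Fin n → ℝ) : Prop :=
  (∀ i j, 0 ≤ W i j) ∧
  W *ᵥ (1 : Fin n → ℝ) = 1 ∧
  ((W.map (algebraMap ℝ ℂ)).charpoly.rootMultiplicity 1 = 1) ∧
  (∀ μ : ℂ, (W.map (algebraMap ℝ ℂ)).charpoly.IsRoot μ → μ ≠ 1 → ‖μ‖ < 1) ∧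
  w ᵥ* W = w ∧
  w ⬝ᵥ (1 : Fin n → ℝ) = 1

open Polynomial
open scoped NNReal ENNReal Topology

section BanachAlgebra

variable {A : Type*} [NormedRing A] [NormedAlgebra ℂ A] [CompleteSpace A]

theorem eventually_nnnorm_pow_lt_pow_of_spectralRadius_lt (a : A) {r : ℝ≥0}
    (h : spectralRadius ℂ a < r) : ∀ᶠ k : ℕ in atTop, ‖a ^ k‖₊ < r ^ k := by
  filter_upwards [(spectrum.pow_nnnorm_pow_one_div_tendsto_nhds_spectralRadius a).eventually
    (gt_mem_nhds h), eventually_ne_atTop 0] with k hk hk0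
  have := ENNReal.rpow_lt_rpow hk (by positivity : (0 : ℝ) < k)
  rw [← ENNReal.rpow_mul, one_div_mul_cancel (by exact_mod_cast hk0), ENNReal.rpow_one,
    ENNReal.rpow_natCast] at this
  exact_mod_cast this

theorem tendsto_pow_atTop_nhds_zero_of_spectralRadius_lt_one {a : A}
    (h : spectralRadius ℂ a < 1) : Tendsto (a ^ ·) atTop (𝓝 0) := by
  obtain ⟨r, hr, hr1⟩ := ENNReal.lt_iff_exists_nnreal_btwn.mp h
  refine squeeze_zero_norm' ?_ (tendsto_pow_atTop_nhds_zero_of_lt_one r.coe_nonneg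
    (by exact_mod_cast hr1))
  filter_upwards [eventually_nnnorm_pow_lt_pow_of_spectralRadius_lt a hr] with k hk
  exact_mod_cast hk.le

theorem spectralRadius_lt_one_of_nnnorm_pow_lt_one [NormOneClass A] {a : A} {k : ℕ} (hk : k ≠ 0)
    (h : ‖a ^ k‖₊ < 1) : spectralRadius ℂ a < 1 := by
  have := (spectrum.spectralRadius_pow_le (𝕜 := ℂ) a k hk).trans
    (spectrum.spectralRadius_le_nnnorm (𝕜 := ℂ) (a ^ k))
  by_contra! h1
  exact (one_le_pow₀ h1).not_gt (this.trans_lt (by exact_mod_cast h))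

theorem isOpen_setOf_spectralRadius_lt_one [NormOneClass A] :
    IsOpen {a : A | spectralRadius ℂ a < 1} := by
  refine isOpen_iff_mem_nhds.mpr fun a ha => ?_
  obtain ⟨r, hr, hr1⟩ := ENNReal.lt_iff_exists_nnreal_btwn.mp ha
  obtain ⟨k, hk, hk0⟩ :=
    ((eventually_nnnorm_pow_lt_pow_of_spectralRadius_lt a hr).and (eventually_ne_atTop 0)).exists
  have hk1 : ‖a ^ k‖₊ < 1 := hk.trans_le (pow_le_one₀ zero_le (by exact_mod_cast hr1.le))
  filter_upwards [(isOpen_lt (continuous_pow k).nnnorm continuous_const).mem_nhds hk1]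
    with b hb using spectralRadius_lt_one_of_nnnorm_pow_lt_one hk0 hb

end BanachAlgebra

theorem add_pow_succ_of_isIdempotentElem {R : Type*} [Ring R] {e b : R} (he : IsIdempotentElem e)
    (heb : e * b = 0) (hbe : b * e = 0) (t : ℕ) : (e + b) ^ (t + 1) = e + b ^ (t + 1) := by
  induction t with
  | zero => simp
  | succ t ih =>
    have hbe' : b ^ (t + 1) * e = 0 := by rw [pow_succ, mul_assoc, hbe, mul_zero]
    rw [pow_succ, ih, add_mul, mul_add, mul_add, he.eq, heb, hbe', ← pow_succ, add_zero, zero_add]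

theorem Polynomial.rootMultiplicity_one_eq_one_and_norm_lt_one_iff {𝕜 : Type*} [NormedField 𝕜]
    {p q : 𝕜[X]} (hq : q ≠ 0) (h : X * p = (X - 1) * q) :
    (p.rootMultiplicity 1 = 1 ∧ ∀ μ, p.IsRoot μ → μ ≠ 1 → ‖μ‖ < 1) ↔
      ∀ μ, q.IsRoot μ → ‖μ‖ < 1 := by
  have hX1 : (X - 1 : 𝕜[X]) ≠ 0 := by simpa using X_sub_C_ne_zero (1 : 𝕜)
  have hp : p ≠ 0 := by rintro rfl; simp_all
  have hmult : p.rootMultiplicity 1 = q.rootMultiplicity 1 + 1 := by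
    have := congrArg (rootMultiplicity 1) h
    rwa [rootMultiplicity_mul (mul_ne_zero X_ne_zero hp), rootMultiplicity_mul (mul_ne_zero hX1 hq),
      rootMultiplicity_eq_zero (by simp), ← C_1, rootMultiplicity_X_sub_C_self, zero_add,
      add_comm] at this
  have hroot {μ : 𝕜} (hμ0 : μ ≠ 0) (hμ1 : μ ≠ 1) : p.IsRoot μ ↔ q.IsRoot μ := by
    have := congrArg (eval μ) h
    simp only [eval_mul, eval_X, eval_sub, eval_one] at this
    simp only [IsRoot.def]
    constructor <;> intro hμ <;> simp_all [sub_eq_zero]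
  constructor
  · rintro ⟨hp1, hp_lt⟩ μ hμ
    have hq1 : ¬ q.IsRoot 1 := fun h1 => by
      have := (rootMultiplicity_pos hq).mpr h1
      omega
    rcases eq_or_ne μ 0 with rfl | hμ0
    · simp
    have hμ1 : μ ≠ 1 := by rintro rfl; exact hq1 hμ
    exact hp_lt μ ((hroot hμ0 hμ1).mpr hμ) hμ1
  · intro hq_lt
    have hq1 : ¬ q.IsRoot 1 := fun h1 => by simpa using hq_lt 1 h1
    refine ⟨by rw [hmult, rootMultiplicity_eq_zero hq1], fun μ hμ hμ1 => ?_⟩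
    rcases eq_or_ne μ 0 with rfl | hμ0
    · simp
    · exact hq_lt μ ((hroot hμ0 hμ1).mp hμ)

namespace Matrix

variable {n : Type*} [Fintype n] [DecidableEq n]

theorem det_one_add_vecMulVec {R : Type*} [CommRing R] (u v : n → R) :
    (1 + vecMulVec u v).det = 1 + v ⬝ᵥ u := by
  rw [vecMulVec_eq Unit, det_one_add_replicateCol_mul_replicateRow]

theorem X_mul_charpoly_eq_of_mulVec_eq_self {R : Type*} [CommRing R] (M : Matrix n n R)
    {u v : n → R} (hu : M *ᵥ u = u) (huv : v ⬝ᵥ u = 1) :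
    X * M.charpoly = (X - 1) * (M - vecMulVec u v).charpoly := by
  set P := vecMulVec u v
  have hMP : M * P = P := by rw [mul_vecMulVec, hu]
  have hPP : P * P = P := by rw [mul_vecMulVec, vecMulVec_mulVec, huv]; simp [P]
  set P' : Matrix n n R[X] := C.mapMatrix P with hP'
  have hMP' : C.mapMatrix M * P' = P' := by rw [← map_mul, hMP]
  have hPP' : P' * P' = P' := by rw [← map_mul, hPP]
  have hdet (c : R[X]) : (1 + c • P').det = 1 + c := by
    have : P' = vecMulVec (C ∘ u) (C ∘ v) := by ext; simp [P, P', vecMulVec_apply]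
    rw [this, ← smul_vecMulVec, det_one_add_vecMulVec, dotProduct_smul, ← RingHom.map_dotProduct,
      huv, map_one, smul_eq_mul, mul_one]
  -- both sides equal `X • 1 - M + (X ^ 2 - 2 * X) • P'`
  have key : charmatrix M * (1 + (X - 1 : R[X]) • P') =
      charmatrix (M - P) * (1 + (X - 2 : R[X]) • P') := by
    simp only [charmatrix, map_sub, scalar_apply, ← smul_one_eq_diagonal, sub_mul, mul_add,
      Matrix.smul_mul, Matrix.mul_smul, one_mul, mul_one, hMP', hPP', smul_smul, ← hP']
    module
  have := congrArg det key
  rw [det_mul, det_mul, hdet, hdet] at this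
  simp only [charpoly]
  linear_combination this

theorem spectralRadius_lt_one_iff (M : Matrix n n ℂ) :
    spectralRadius ℂ M < 1 ↔ ∀ μ, M.charpoly.IsRoot μ → ‖μ‖ < 1 := by
  simp_rw [← mem_spectrum_iff_isRoot_charpoly]
  refine ⟨fun h μ hμ => ?_, fun h => ?_⟩
  · exact_mod_cast (le_iSup₂ (f := fun k _ => (‖k‖₊ : ℝ≥0∞)) μ hμ).trans_lt h
  rcases (spectrum ℂ M).eq_empty_or_nonempty with he | hne
  · simp [spectralRadius, he]
  · -- `spectralRadius` does not depend on a norm; any Banach algebra norm on matrices will do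
    let _ := Matrix.linftyOpNormedRing (n := n) (α := ℂ)
    let _ := Matrix.linftyOpNormedAlgebra (n := n) (α := ℂ) (R := ℂ)
    exact_mod_cast spectrum.spectralRadius_lt_of_forall_lt_of_nonempty hne (r := 1)
      fun k hk => mod_cast h k hk

theorem isOpen_setOf_spectralRadius_map_lt_one [Nonempty n] :
    IsOpen {B : Matrix n n ℝ | spectralRadius ℂ (B.map (algebraMap ℝ ℂ)) < 1} := by
  have : IsOpen {M : Matrix n n ℂ | spectralRadius ℂ M < 1} := by
    let _ := Matrix.linftyOpNormedRing (n := n) (α := ℂ)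
    let _ := Matrix.linftyOpNormedAlgebra (n := n) (α := ℂ) (R := ℂ)
    exact isOpen_setOf_spectralRadius_lt_one
  exact this.preimage (continuous_id.matrix_map Complex.continuous_ofReal)

theorem tendsto_pow_atTop_nhds_zero_of_spectralRadius_map_lt_one {B : Matrix n n ℝ}
    (h : spectralRadius ℂ (B.map (algebraMap ℝ ℂ)) < 1) : Tendsto (B ^ ·) atTop (𝓝 0) := by
  have hC : Tendsto (B.map (algebraMap ℝ ℂ) ^ ·) atTop (𝓝 0) := by
    let _ := Matrix.linftyOpNormedRing (n := n) (α := ℂ)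
    let _ := Matrix.linftyOpNormedAlgebra (n := n) (α := ℂ) (R := ℂ)
    exact tendsto_pow_atTop_nhds_zero_of_spectralRadius_lt_one h
  have := ((continuous_id.matrix_map Complex.continuous_re).tendsto 0).comp hC
  convert this using 2 with t
  · rw [Function.comp_apply, ← RingHom.mapMatrix_apply, ← map_pow]
    ext
    simp
  · simp

theorem rootMultiplicity_one_eq_one_and_norm_lt_one_iff_spectralRadius_lt_one
    (A : Matrix n n ℝ) {u v : n → ℝ} (hu : A *ᵥ u = u) (huv : v ⬝ᵥ u = 1) :
    ((A.map (algebraMap ℝ ℂ)).charpoly.rootMultiplicity 1 = 1 ∧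
      ∀ μ : ℂ, (A.map (algebraMap ℝ ℂ)).charpoly.IsRoot μ → μ ≠ 1 → ‖μ‖ < 1) ↔
      spectralRadius ℂ ((A - vecMulVec u v).map (algebraMap ℝ ℂ)) < 1 := by
  rw [spectralRadius_lt_one_iff]
  refine Polynomial.rootMultiplicity_one_eq_one_and_norm_lt_one_iff (charpoly_monic _).ne_zero ?_
  have := congrArg (Polynomial.map (algebraMap ℝ ℂ)) (X_mul_charpoly_eq_of_mulVec_eq_self A hu huv)
  rwa [Polynomial.map_mul, Polynomial.map_mul, Polynomial.map_X, Polynomial.map_sub,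
    Polynomial.map_X, Polynomial.map_one, ← charpoly_map, ← charpoly_map] at this

theorem tendsto_pow_mulVec_of_spectralRadius_map_sub_vecMulVec_lt_one (A : Matrix n n ℝ)
    {u w : n → ℝ} (hu : A *ᵥ u = u) (hw : w ᵥ* A = w) (hwu : w ⬝ᵥ u = 1)
    (h : spectralRadius ℂ ((A - vecMulVec u w).map (algebraMap ℝ ℂ)) < 1) (x : n → ℝ) :
    Tendsto (fun t => A ^ t *ᵥ x) atTop (𝓝 ((w ⬝ᵥ x) • u)) := by
  set J := vecMulVec u w
  have hJ : IsIdempotentElem J := by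
    rw [IsIdempotentElem, mul_vecMulVec, vecMulVec_mulVec, hwu]
    simp [J]
  have hpow (t : ℕ) : A ^ (t + 1) = J + (A - J) ^ (t + 1) := by
    simpa using add_pow_succ_of_isIdempotentElem (b := A - J) hJ
      (by rw [mul_sub, hJ.eq, vecMulVec_mul, hw, sub_self])
      (by rw [sub_mul, hJ.eq, mul_vecMulVec, hu, sub_self]) t
  have hlim : Tendsto (A ^ ·) atTop (𝓝 J) := by
    rw [← tendsto_add_atTop_iff_nat 1]
    simpa [hpow] using tendsto_const_nhds.add
      ((tendsto_pow_atTop_nhds_zero_of_spectralRadius_map_lt_one h).comp (tendsto_add_atTop_nat 1))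
  simpa [J, vecMulVec_mulVec, Function.comp_def] using
    ((continuous_id.matrix_mulVec continuous_const).tendsto J).comp hlim

end Matrix

/-- If the subspace of feedback matrices `K` supported on the support of `W` with
`K𝟙 = 0` and `wᵀK = 0` contains a nonzero element, then it contains a nonzero `K`
such that `W + K` keeps `1` as a simple eigenvalue, all its other eigenvalues stay in
the open unit disk, `K` respects the off-diagonal sparsity of `W`, and consensus to
`(wᵀx₀)·𝟙` is preserved for every initial state. -/
theorem stmt10 {n : ℕ} (W : Matrix (Fin n) (Fin n) ℝ) (w : Fin n → ℝ)
    (hW : Assumption1 W w)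
    (hV : ∃ K₀ : Matrix (Fin n) (Fin n) ℝ, K₀ ≠ 0 ∧
        (∀ i j, W i j = 0 → K₀ i j = 0) ∧
        K₀ *ᵥ (1 : Fin n → ℝ) = 0 ∧ w ᵥ* K₀ = 0) :
    ∃ K : Matrix (Fin n) (Fin n) ℝ, K ≠ 0 ∧
      (∀ i j, W i j = 0 → K i j = 0) ∧
      K *ᵥ (1 : Fin n → ℝ) = 0 ∧
      w ᵥ* K = 0 ∧
      (((W + K).map (algebraMap ℝ ℂ)).charpoly.rootMultiplicity 1 = 1) ∧
      (∀ μ : ℂ, ((W + K).map (algebraMap ℝ ℂ)).charpoly.IsRoot μ → μ ≠ 1 →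
        ‖μ‖ < 1) ∧
      (∀ i j, W i j = 0 → i ≠ j → K i j = 0) ∧
      (∀ x₀ : Fin n → ℝ,
        Tendsto (fun t : ℕ => ((W + K) ^ t) *ᵥ x₀) atTop
          (nhds ((w ⬝ᵥ x₀) • (1 : Fin n → ℝ)))) := by
  obtain ⟨-, hW1, hW_simple, hW_disk, hwW, hw1⟩ := hW
  obtain ⟨K₀, hK₀, hK₀W, hK₀1, hwK₀⟩ := hV
  have : Nonempty (Fin n) := by
    contrapose! hK₀
    exact Subsingleton.elim _ _
  set J := vecMulVec 1 w
  have hA1 (ε : ℝ) : (W + ε • K₀) *ᵥ 1 = 1 := by simp [add_mulVec, smul_mulVec, hW1, hK₀1]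
  have hwA (ε : ℝ) : w ᵥ* (W + ε • K₀) = w := by simp [vecMul_add, vecMul_smul, hwW, hwK₀]
  have hstable : ∀ᶠ ε in 𝓝 (0 : ℝ),
      spectralRadius ℂ ((W + ε • K₀ - J).map (algebraMap ℝ ℂ)) < 1 := by
    refine (isOpen_setOf_spectralRadius_map_lt_one.preimage (by fun_prop)).mem_nhds ?_
    have hW_defl := (rootMultiplicity_one_eq_one_and_norm_lt_one_iff_spectralRadius_lt_one W hW1
      hw1).mp ⟨hW_simple, hW_disk⟩
    simpa only [Set.mem_preimage, Set.mem_ofPred_eq, zero_smul, add_zero] using hW_defl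
  obtain ⟨ε, hε, hε0⟩ := ((hstable.filter_mono nhdsWithin_le_nhds).and
    (self_mem_nhdsWithin (s := Set.Ioi 0))).exists
  obtain ⟨hA_simple, hA_disk⟩ :=
    (rootMultiplicity_one_eq_one_and_norm_lt_one_iff_spectralRadius_lt_one _ (hA1 ε) hw1).mpr hε
  refine ⟨ε • K₀, smul_ne_zero (ne_of_gt hε0) hK₀, fun i j hij => by simp [hK₀W i j hij],
    by simp [smul_mulVec, hK₀1], by simp [vecMul_smul, hwK₀], hA_simple, hA_disk,
    fun i j hij _ => by simp [hK₀W i j hij], fun x₀ => ?_⟩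
  exact tendsto_pow_mulVec_of_spectralRadius_map_sub_vecMulVec_lt_one _ (hA1 ε) (hwA ε) hw1 hε x₀
end

section
/- Let W ∈ ℝ^{n×n} satisfy Assumption 1 with normalized left Perron eigenvector w, let α > 0, and set K = −α(I − W). If every (complex) eigenvalue λ ≠ 1 of W satisfies |(1+α)λ − α| < 1, then 1 is a simple eigenvalue of W+K, every other eigenvalue of W+K has modulus strictly less than 1, and for every x₀ ∈ ℝ^n, lim_{t→∞} (W+K)^t x₀ = (wᵀx₀)·1. -/
/-!
`W + K = (1 + α) W - α I`, so the eigenvalues of `W + K` are the images of those of `W` under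
`λ ↦ (1 + α) λ - α`, multiplicities included: `1` stays a simple eigenvalue and the hypothesis
puts all the others in the open unit disk.

For the limit, deflate `M = W + K` by the rank-one projection `P = 𝟙 wᵀ`. Brauer's identity
`χ_{M - P}(X) (X - 1) = χ_M(X) X` shows that the spectrum of `M - P` is that of `M` with the
simple eigenvalue `1` replaced by `0`, so `(M - P)ᵗ → 0` by Gelfand's formula. Since
`MP = PM = P = P²`, we have `Mᵗ = (M - P)ᵗ + P` for `t ≥ 1`, hence `Mᵗ x₀ → P x₀ = (wᵀx₀) 𝟙`.
-/

open Matrix Filter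

open Polynomial Topology

theorem add_pow_succ_of_mul_eq_zero {R : Type*} [Semiring R] {a p : R} (hap : a * p = 0)
    (hpa : p * a = 0) (hp : IsIdempotentElem p) (t : ℕ) :
    (a + p) ^ (t + 1) = a ^ (t + 1) + p := by
  induction t with
  | zero => simp
  | succ t ih =>
    have hap' : a ^ (t + 1) * p = 0 := by rw [pow_succ, mul_assoc, hap, mul_zero]
    rw [pow_succ, ih, add_mul, mul_add, mul_add, hap', hpa, hp.eq, add_zero, zero_add, ← pow_succ]

theorem tendsto_pow_atTop_nhds_zero_of_spectralRadius_lt_one_s13 {A : Type*} [NormedRing A]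
    [NormedAlgebra ℂ A] [CompleteSpace A] {a : A} (ha : spectralRadius ℂ a < 1) :
    Tendsto (fun t : ℕ => a ^ t) atTop (𝓝 0) := by
  obtain ⟨r, hρr, hr1⟩ := ENNReal.lt_iff_exists_nnreal_btwn.mp ha
  have hbound : ∀ᶠ t : ℕ in atTop, ‖a ^ t‖₊ ≤ r ^ t := by
    have hgelfand := spectrum.pow_nnnorm_pow_one_div_tendsto_nhds_spectralRadius a
    filter_upwards [hgelfand.eventually_lt_const hρr, eventually_gt_atTop 0] with t ht ht0
    have ht0' : (0 : ℝ) < t := by exact_mod_cast ht0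
    rw [← ENNReal.coe_rpow_of_nonneg _ (by positivity), ENNReal.coe_lt_coe, one_div,
      NNReal.rpow_inv_lt_iff ht0', NNReal.rpow_natCast] at ht
    exact ht.le
  refine squeeze_zero_norm' (hbound.mono fun t ht => ?_)
    (tendsto_pow_atTop_nhds_zero_of_lt_one r.2 ?_)
  · exact_mod_cast ht
  · exact_mod_cast hr1

namespace Matrix

variable {n : Type*} [Fintype n] [DecidableEq n]

theorem charpoly_smul_add_scalar_comp {R : Type*} [CommRing R] [IsDomain R] [Infinite R]
    (A : Matrix n n R) (c d : R) :
    (c • A + scalar n d).charpoly.comp (C c * X + C d) =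
      C (c ^ Fintype.card n) * A.charpoly := by
  refine Polynomial.funext fun x => ?_
  have h : scalar n (c * x + d) - (c • A + scalar n d) = c • (scalar n x - A) := by
    ext i j
    rcases eq_or_ne i j with rfl | hij
    · simp only [sub_apply, add_apply, smul_apply, scalar_apply, diagonal_apply_eq, smul_eq_mul]
      ring
    · simp [hij]
  simp only [eval_comp, eval_mul, eval_add, eval_C, eval_X, eval_charpoly, h, det_smul]

theorem rootMultiplicity_charpoly_smul_add_scalar {K : Type*} [Field K] [Infinite K]
    (A : Matrix n n K) {c : K} (hc : c ≠ 0) (d μ : K) :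
    (c • A + scalar n d).charpoly.rootMultiplicity (c * μ + d) =
      A.charpoly.rootMultiplicity μ := by
  have hC : C (c ^ Fintype.card n) ≠ 0 := C_ne_zero.mpr (pow_ne_zero _ hc)
  rw [← rootMultiplicity_comp_C_mul_X_add_C _ _ _ _ hc.isUnit, charpoly_smul_add_scalar_comp,
    rootMultiplicity_mul (mul_ne_zero hC (charpoly_monic A).ne_zero), rootMultiplicity_C, zero_add]

theorem norm_lt_one_of_isRoot_charpoly_smul_add_scalar {A : Matrix n n ℂ} {c d : ℂ}
    (hc : c ≠ 0) (hcd : c + d = 1)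
    (h : ∀ lam, A.charpoly.IsRoot lam → lam ≠ 1 → ‖c * lam + d‖ < 1) {μ : ℂ}
    (hμ : (c • A + scalar n d).charpoly.IsRoot μ) (hμ1 : μ ≠ 1) : ‖μ‖ < 1 := by
  have hμ_eq : μ = c * ((μ - d) / c) + d := by rw [mul_div_cancel₀ _ hc, sub_add_cancel]
  have hroot : A.charpoly.IsRoot ((μ - d) / c) := by
    rw [← rootMultiplicity_pos (charpoly_monic _).ne_zero,
      ← rootMultiplicity_charpoly_smul_add_scalar A hc d, ← hμ_eq]
    exact (rootMultiplicity_pos (charpoly_monic _).ne_zero).mpr hμ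
  have hne : (μ - d) / c ≠ 1 := fun h1 => hμ1 (by rw [hμ_eq, h1, mul_one, hcd])
  simpa only [← hμ_eq] using h _ hroot hne

theorem charpoly_sub_smul_vecMulVec_mul_X_sub_C {K : Type*} [Field K] [Infinite K]
    {M : Matrix n n K} {v w : n → K} {ev : K} (hv : M *ᵥ v = ev • v) (hwv : w ⬝ᵥ v = 1) :
    (M - ev • vecMulVec v w).charpoly * (X - C ev) = M.charpoly * X := by
  refine eq_of_infinite_eval_eq _ _ <| (Set.finite_singleton ev).infinite_compl.mono
    fun x (hx : x ≠ ev) => ?_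
  have hx' : x - ev ≠ 0 := sub_ne_zero.mpr hx
  have hres : (scalar n x - M) *ᵥ ((ev * (x - ev)⁻¹) • v) = ev • v := by
    have hx : scalar n x *ᵥ v = x • v := by ext; simp [mulVec_diagonal]
    rw [mulVec_smul, sub_mulVec, hv, hx, ← sub_smul, smul_smul]
    congr 1
    field_simp
  have hfac : scalar n x - (M - ev • vecMulVec v w)
      = (scalar n x - M) * (1 + vecMulVec ((ev * (x - ev)⁻¹) • v) w) := by
    rw [Matrix.mul_add, Matrix.mul_one, mul_vecMulVec, hres, smul_vecMulVec]
    abel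
  rw [Set.mem_ofPred_eq, eval_mul, eval_mul, eval_sub, eval_X, eval_C, eval_charpoly,
    eval_charpoly, hfac, det_mul, vecMulVec_eq Unit, det_one_add_replicateCol_mul_replicateRow,
    dotProduct_smul, hwv, smul_eq_mul]
  field_simp
  ring

theorem isRoot_charpoly_sub_vecMulVec {K : Type*} [Field K] [Infinite K]
    {M : Matrix n n K} {v w : n → K} (hv : M *ᵥ v = v) (hwv : w ⬝ᵥ v = 1)
    (hsimple : M.charpoly.rootMultiplicity 1 = 1) {μ : K}
    (hμ : (M - vecMulVec v w).charpoly.IsRoot μ) : μ = 0 ∨ M.charpoly.IsRoot μ ∧ μ ≠ 1 := by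
  have h := charpoly_sub_smul_vecMulVec_mul_X_sub_C (ev := 1) (by rwa [one_smul]) hwv
  rw [one_smul] at h
  rcases eq_or_ne μ 1 with rfl | hμ1
  · have hmult := congrArg (rootMultiplicity 1) h
    rw [rootMultiplicity_mul ((charpoly_monic _).mul (monic_X_sub_C 1)).ne_zero,
      rootMultiplicity_mul ((charpoly_monic _).mul monic_X).ne_zero,
      rootMultiplicity_X_sub_C_self, hsimple,
      rootMultiplicity_eq_zero (by simp : ¬ (X : K[X]).IsRoot 1)] at hmult
    have := (rootMultiplicity_pos (charpoly_monic _).ne_zero).mpr hμ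
    omega
  · have heval := congrArg (eval μ) h
    rw [eval_mul, eval_mul, hμ.eq_zero, zero_mul, eval_X, eq_comm, mul_eq_zero] at heval
    exact heval.elim (fun h => Or.inr ⟨h, hμ1⟩) Or.inl

theorem tendsto_pow_atTop_nhds_zero_of_forall_isRoot_charpoly {A : Matrix n n ℂ}
    (h : ∀ μ, A.charpoly.IsRoot μ → ‖μ‖ < 1) : Tendsto (fun t : ℕ => A ^ t) atTop (𝓝 0) := by
  -- The `ℓ∞` operator norm makes `Matrix n n ℂ` a Banach algebra inducing its usual topology.
  let _ := Matrix.linftyOpNormedRing (n := n) (α := ℂ)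
  let _ := Matrix.linftyOpNormedAlgebra (n := n) (R := ℂ) (α := ℂ)
  rcases subsingleton_or_nontrivial (Matrix n n ℂ) with hA | hA
  · simp [Subsingleton.elim _ (0 : Matrix n n ℂ)]
  refine tendsto_pow_atTop_nhds_zero_of_spectralRadius_lt_one_s13 ?_
  exact_mod_cast spectrum.spectralRadius_lt_of_forall_lt A fun z hz =>
    by exact_mod_cast h z (mem_spectrum_iff_isRoot_charpoly.mp hz)

theorem tendsto_pow_atTop_nhds_zero_of_forall_isRoot_charpoly_map {A : Matrix n n ℝ}
    (h : ∀ μ, (A.map (algebraMap ℝ ℂ)).charpoly.IsRoot μ → ‖μ‖ < 1) :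
    Tendsto (fun t : ℕ => A ^ t) atTop (𝓝 0) := by
  have hre (t : ℕ) : A ^ t = ((A.map (algebraMap ℝ ℂ)) ^ t).map Complex.re := by
    rw [← RingHom.mapMatrix_apply, ← map_pow, RingHom.mapMatrix_apply, Matrix.map_map]
    ext
    simp
  simp_rw [hre]
  simpa [Function.comp_def] using
    ((continuous_id.matrix_map Complex.continuous_re).tendsto 0).comp
      (tendsto_pow_atTop_nhds_zero_of_forall_isRoot_charpoly h)

theorem tendsto_pow_mulVec_nhds_dotProduct_smul {M : Matrix n n ℝ} {v w : n → ℝ}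
    (hv : M *ᵥ v = v) (hw : w ᵥ* M = w) (hwv : w ⬝ᵥ v = 1)
    (hsimple : (M.map (algebraMap ℝ ℂ)).charpoly.rootMultiplicity 1 = 1)
    (hlt : ∀ μ, (M.map (algebraMap ℝ ℂ)).charpoly.IsRoot μ → μ ≠ 1 → ‖μ‖ < 1) (x : n → ℝ) :
    Tendsto (fun t : ℕ => M ^ t *ᵥ x) atTop (𝓝 ((w ⬝ᵥ x) • v)) := by
  set f := algebraMap ℝ ℂ
  have hvc : M.map f *ᵥ (f ∘ v) = f ∘ v := by
    ext i
    rw [← RingHom.map_mulVec, hv, Function.comp_apply]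
  have hwvc : (f ∘ w) ⬝ᵥ (f ∘ v) = 1 := by rw [← RingHom.map_dotProduct, hwv, map_one]
  have hdefl : (M - vecMulVec v w).map f = M.map f - vecMulVec (f ∘ v) (f ∘ w) := by
    ext
    simp [vecMulVec_apply]
  have hN : Tendsto (fun t : ℕ => (M - vecMulVec v w) ^ t) atTop (𝓝 0) :=
    tendsto_pow_atTop_nhds_zero_of_forall_isRoot_charpoly_map fun μ hμ => by
      rw [hdefl] at hμ
      rcases isRoot_charpoly_sub_vecMulVec hvc hwvc hsimple hμ with rfl | ⟨hroot, hμ1⟩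
      · simp
      · exact hlt μ hroot hμ1
  have hP : IsIdempotentElem (vecMulVec v w) := by
    rw [IsIdempotentElem, vecMulVec_mul_vecMulVec, hwv, one_smul]
  have hNP : (M - vecMulVec v w) * vecMulVec v w = 0 := by
    rw [Matrix.sub_mul, mul_vecMulVec, hv, hP.eq, sub_self]
  have hPN : vecMulVec v w * (M - vecMulVec v w) = 0 := by
    rw [Matrix.mul_sub, vecMulVec_mul, hw, hP.eq, sub_self]
  have hpow : Tendsto (fun t : ℕ => M ^ t) atTop (𝓝 (vecMulVec v w)) := by
    rw [← tendsto_add_atTop_iff_nat 1]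
    have := ((tendsto_add_atTop_iff_nat 1).mpr hN).add_const (vecMulVec v w)
    simpa only [← add_pow_succ_of_mul_eq_zero hNP hPN hP, sub_add_cancel, zero_add] using this
  have hmulVec : Tendsto (fun t : ℕ => M ^ t *ᵥ x) atTop (𝓝 (vecMulVec v w *ᵥ x)) :=
    ((continuous_id.matrix_mulVec continuous_const).tendsto _).comp hpow
  rwa [vecMulVec_mulVec, op_smul_eq_smul] at hmulVec

end Matrix

/-- For `K = -α(I - W)` with `α > 0`: if every non-unit eigenvalue `λ` of `W` satisfies
`|(1+α)λ - α| < 1`, then `1` is a simple eigenvalue of `W + K`, all other eigenvalues of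
`W + K` lie in the open unit disk, and consensus to `(wᵀx₀)·𝟙` is preserved. -/
theorem stmt13 {n : ℕ} (W : Matrix (Fin n) (Fin n) ℝ) (w : Fin n → ℝ)
    (hW : Assumption1 W w) (α : ℝ) (hα0 : 0 < α)
    (K : Matrix (Fin n) (Fin n) ℝ)
    (hK : K = -α • ((1 : Matrix (Fin n) (Fin n) ℝ) - W))
    (heig : ∀ lam : ℂ, (W.map (algebraMap ℝ ℂ)).charpoly.IsRoot lam → lam ≠ 1 →
      ‖(1 + (α : ℂ)) * lam - (α : ℂ)‖ < 1) :
    (((W + K).map (algebraMap ℝ ℂ)).charpoly.rootMultiplicity 1 = 1) ∧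
    (∀ μ : ℂ, ((W + K).map (algebraMap ℝ ℂ)).charpoly.IsRoot μ → μ ≠ 1 →
      ‖μ‖ < 1) ∧
    (∀ x₀ : Fin n → ℝ,
      Tendsto (fun t : ℕ => ((W + K) ^ t) *ᵥ x₀) atTop
        (nhds ((w ⬝ᵥ x₀) • (1 : Fin n → ℝ)))) := by
  obtain ⟨-, hW1, hsimple, -, hwW, hw1⟩ := hW
  subst hK
  have hc : (1 + α : ℂ) ≠ 0 := by exact_mod_cast (by linarith : 1 + α ≠ 0)
  have hmap : (W + -α • (1 - W)).map (algebraMap ℝ ℂ)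
      = (1 + (α : ℂ)) • W.map (algebraMap ℝ ℂ) + scalar (Fin n) (-(α : ℂ)) := by
    ext i j
    rcases eq_or_ne i j with rfl | hij <;> simp [*, one_apply] <;> ring
  have hsimple' : ((W + -α • (1 - W)).map (algebraMap ℝ ℂ)).charpoly.rootMultiplicity 1 = 1 := by
    have := rootMultiplicity_charpoly_smul_add_scalar (W.map (algebraMap ℝ ℂ)) hc (-(α : ℂ)) 1
    rwa [mul_one, add_neg_cancel_right, hsimple, ← hmap] at this
  have hlt (μ : ℂ) (hμ : ((W + -α • (1 - W)).map (algebraMap ℝ ℂ)).charpoly.IsRoot μ)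
      (hμ1 : μ ≠ 1) : ‖μ‖ < 1 := by
    rw [hmap] at hμ
    refine norm_lt_one_of_isRoot_charpoly_smul_add_scalar hc (add_neg_cancel_right 1 _)
      (fun lam hlam hlam1 => ?_) hμ hμ1
    simpa only [sub_eq_add_neg] using heig lam hlam hlam1
  have hv : (W + -α • (1 - W)) *ᵥ 1 = 1 := by
    rw [add_mulVec, smul_mulVec, sub_mulVec, one_mulVec, hW1, sub_self, smul_zero, add_zero]
  have hw : w ᵥ* (W + -α • (1 - W)) = w := by
    rw [vecMul_add, vecMul_smul, vecMul_sub, vecMul_one, hwW, sub_self, smul_zero, add_zero]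
  exact ⟨hsimple', hlt, tendsto_pow_mulVec_nhds_dotProduct_smul hv hw hw1 hsimple' hlt⟩
end
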